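/- arXiv:1105.6355 — 3 statements merged into one kernel-verified Lean document; each statement's English description precedes it below -/
import Mathlib

section
/- Let φ(z,·) be, for each z ∈ ℂ, a solution of -u'' + q·u = z·u on (a,b), real-valued for real z, with φ(·,x) and φ'(·,x) entire for each x, and suppose the Wronskian W(φ(ζ,·)*, φ(z,·))(x) → 0 as x ↓ a for all ζ, z ∈ ℂ. Define E(z,c) = φ(z,c) + i·φ'(z,c). Then for all ζ, z ∈ ℂ with ζ* ≠ z, (E(z,c)·E^#(ζ*,c) − E(ζ*,c)·E^#(z,c)) / (2i(ζ* − z)) = ∫_a^c φ(ζ,x)* · φ(z,x) dx. -/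
/-!
The Wronskian `W(x) = conj φ(ζ,x) φ'(z,x) - conj φ'(ζ,x) φ(z,x)` satisfies
`W' = (ζ* - z) conj φ(ζ,·) φ(z,·)` (Lagrange identity), and it vanishes at `a`, so integrating
over `(a, c)` gives `(ζ* - z) ∫ₐᶜ conj φ(ζ,·) φ(z,·) = W(c)`. Since `φ(·,c)` and `φ'(·,c)` are
entire and real on `ℝ`, Schwarz reflection gives `φ(w*,c) = φ(w,c)*`, which turns the numerator
of the left-hand side into `2i W(c)`.
-/

open Set MeasureTheory Filter Topology ComplexConjugate

theorem Differentiable.apply_conj_of_real {f : ℂ → ℂ} (hf : Differentiable ℂ f)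
    (hreal : ∀ t : ℝ, (f t).im = 0) (z : ℂ) : f (conj z) = conj (f z) := by
  have hg : Differentiable ℂ (conj ∘ f ∘ conj) := fun w => by
    simpa using (hf (conj w)).conj_conj
  have hfreq : ∃ᶠ w in 𝓝[≠] (0 : ℂ), (conj ∘ f ∘ conj) w = f w := by
    have hR : Tendsto ((↑) : ℝ → ℂ) (𝓝[≠] 0) (𝓝[≠] 0) :=
      tendsto_nhdsWithin_of_tendsto_nhds_of_eventually_within _
        (Complex.continuous_ofReal.tendsto' 0 0 Complex.ofReal_zero |>.mono_left
          nhdsWithin_le_nhds)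
        (eventually_nhdsWithin_of_forall fun t ht => by simpa using ht)
    refine hR.frequently (Frequently.of_forall fun t => ?_)
    simp [Complex.conj_eq_iff_im.2 (hreal t)]
  have heq :=
    (hg.differentiableOn.analyticOnNhd isOpen_univ).eqOn_of_preconnected_of_frequently_eq
      (hf.differentiableOn.analyticOnNhd isOpen_univ) isPreconnected_univ (mem_univ 0) hfreq
  simpa using (heq (mem_univ (conj z))).symm

theorem hasDerivAt_wronskian_conj {q : ℝ → ℝ} {u u' v v' : ℝ → ℂ} {ζ z : ℂ} {x : ℝ}
    (hu : HasDerivAt u (u' x) x) (hu' : HasDerivAt u' ((q x - ζ) * u x) x)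
    (hv : HasDerivAt v (v' x) x) (hv' : HasDerivAt v' ((q x - z) * v x) x) :
    HasDerivAt (fun t => conj (u t) * v' t - conj (u' t) * v t)
      ((conj ζ - z) * (conj (u x) * v x)) x := by
  refine ((hu.star.mul hv').sub (hu'.star.mul hv)).congr_deriv ?_
  simp only [star_mul', star_sub, Complex.star_def, Complex.conj_ofReal]
  ring

theorem integral_Ioo_eq_sub_of_hasDerivAt_of_tendsto_left {E : Type*} [NormedAddCommGroup E]
    [NormedSpace ℝ E] [CompleteSpace E] {f f' : ℝ → E} {a c : ℝ} {fa : E} (hac : a < c)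
    (hderiv : ∀ x ∈ Ioo a c, HasDerivAt f (f' x) x) (hc : ContinuousAt f c)
    (hint : IntegrableOn f' (Ioo a c)) (ha : Tendsto f (𝓝[>] a) (𝓝 fa)) :
    ∫ x in Ioo a c, f' x = f c - fa := by
  rw [← integral_Ioc_eq_integral_Ioo, ← intervalIntegral.integral_of_le hac.le]
  exact intervalIntegral.integral_eq_sub_of_hasDerivAt_of_tendsto hac hderiv
    ((intervalIntegrable_iff_integrableOn_Ioo_of_le hac.le).2 hint) ha
    (hc.tendsto.mono_left nhdsWithin_le_nhds)

theorem stmt_4_general (a b c : ℝ) (hc : c ∈ Ioo a b) (q : ℝ → ℝ)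
    (φ φ' : ℂ → ℝ → ℂ)
    (hder : ∀ (z : ℂ), ∀ x ∈ Ioo a b, HasDerivAt (φ z) (φ' z x) x)
    (hode : ∀ (z : ℂ), ∀ x ∈ Ioo a b, HasDerivAt (φ' z) (((q x : ℂ) - z) * φ z x) x)
    (hreal : ∀ (lam : ℝ) (x : ℝ), (φ (lam : ℂ) x).im = 0 ∧ (φ' (lam : ℂ) x).im = 0)
    (hent : ∀ x ∈ Ioo a b, Differentiable ℂ (fun z => φ z x) ∧
      Differentiable ℂ (fun z => φ' z x))
    (hL2 : ∀ (ζ z : ℂ), IntegrableOn (fun x => (starRingEnd ℂ) (φ ζ x) * φ z x) (Ioo a c))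
    (hwron : ∀ (ζ z : ℂ),
      Tendsto (fun x => (starRingEnd ℂ) (φ ζ x) * φ' z x - (starRingEnd ℂ) (φ' ζ x) * φ z x)
        (nhdsWithin a (Ioi a)) (nhds 0))
    (E : ℂ → ℝ → ℂ) (hEdef : ∀ (z : ℂ) (x : ℝ), E z x = φ z x + Complex.I * φ' z x) :
    ∀ (ζ z : ℂ), (starRingEnd ℂ) ζ ≠ z →
      (E z c * (starRingEnd ℂ) (E ζ c) -
          E ((starRingEnd ℂ) ζ) c * (starRingEnd ℂ) (E ((starRingEnd ℂ) z) c)) /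
        (2 * Complex.I * ((starRingEnd ℂ) ζ - z)) =
      ∫ x in Ioo a c, (starRingEnd ℂ) (φ ζ x) * φ z x := by
  intro ζ z hne
  have hreflφ := (hent c hc).1.apply_conj_of_real fun t => (hreal t c).1
  have hreflφ' := (hent c hc).2.apply_conj_of_real fun t => (hreal t c).2
  have hWder : ∀ x ∈ Ioo a b, HasDerivAt
      (fun t => conj (φ ζ t) * φ' z t - conj (φ' ζ t) * φ z t)
      ((conj ζ - z) * (conj (φ ζ x) * φ z x)) x := fun x hx =>
    hasDerivAt_wronskian_conj (hder ζ x hx) (hode ζ x hx) (hder z x hx) (hode z x hx)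
  have hlagrange : (conj ζ - z) * ∫ x in Ioo a c, conj (φ ζ x) * φ z x
      = conj (φ ζ c) * φ' z c - conj (φ' ζ c) * φ z c := by
    rw [← integral_const_mul, integral_Ioo_eq_sub_of_hasDerivAt_of_tendsto_left hc.1
      (fun x hx => hWder x ⟨hx.1, hx.2.trans hc.2⟩) (hWder c hc).continuousAt
      ((hL2 ζ z).const_mul _) (hwron ζ z), sub_zero]
  have hden : 2 * Complex.I * (conj ζ - z) ≠ 0 :=
    mul_ne_zero (by simp) (sub_ne_zero.2 hne)
  rw [div_eq_iff hden, hEdef, hEdef, hEdef, hEdef, hreflφ, hreflφ', hreflφ, hreflφ']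
  simp only [map_add, map_mul, Complex.conj_I, Complex.conj_conj]
  linear_combination (-2 * Complex.I) * hlagrange

/-- Lagrange identity / reproducing kernel formula for `E(z,c) = φ(z,c) + i φ'(z,c)`. -/
theorem stmt_4 (a b c : ℝ) (hc : c ∈ Ioo a b) (q : ℝ → ℝ)
    (hq : LocallyIntegrableOn q (Ioo a b))
    (φ φ' : ℂ → ℝ → ℂ)
    (hder : ∀ (z : ℂ), ∀ x ∈ Ioo a b, HasDerivAt (φ z) (φ' z x) x)
    (hode : ∀ (z : ℂ), ∀ x ∈ Ioo a b, HasDerivAt (φ' z) (((q x : ℂ) - z) * φ z x) x)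
    (hreal : ∀ (lam : ℝ) (x : ℝ), (φ (lam : ℂ) x).im = 0 ∧ (φ' (lam : ℂ) x).im = 0)
    (hent : ∀ x ∈ Ioo a b, Differentiable ℂ (fun z => φ z x) ∧
      Differentiable ℂ (fun z => φ' z x))
    (hL2 : ∀ (ζ z : ℂ), IntegrableOn (fun x => (starRingEnd ℂ) (φ ζ x) * φ z x) (Ioo a c))
    (hwron : ∀ (ζ z : ℂ),
      Tendsto (fun x => (starRingEnd ℂ) (φ ζ x) * φ' z x - (starRingEnd ℂ) (φ' ζ x) * φ z x)
        (nhdsWithin a (Ioi a)) (nhds 0))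
    (E : ℂ → ℝ → ℂ) (hEdef : ∀ (z : ℂ) (x : ℝ), E z x = φ z x + Complex.I * φ' z x) :
    ∀ (ζ z : ℂ), (starRingEnd ℂ) ζ ≠ z →
      (E z c * (starRingEnd ℂ) (E ζ c) -
          E ((starRingEnd ℂ) ζ) c * (starRingEnd ℂ) (E ((starRingEnd ℂ) z) c)) /
        (2 * Complex.I * ((starRingEnd ℂ) ζ - z)) =
      ∫ x in Ioo a c, (starRingEnd ℂ) (φ ζ x) * φ z x :=
  stmt_4_general a b c hc q φ φ' hder hode hreal hent hL2 hwron E hEdef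
end

section
/- Let (B(c))_{c ∈ (a,b)} be a family of closed subspaces of a Hilbert space H such that B(c₁) ⊆ B(c₂) whenever c₁ < c₂, with ∪_{c} B(c) dense in H and ∩_{x > c} B(x) = B(c) = closure(∪_{x < c} B(x)) for each c. Suppose B' is another closed subspace such that for every c, either B' ⊆ B(c) or B(c) ⊆ B', and suppose B' ≠ {0} and B' is not dense in H, and K is a family of vectors witnessing that ∩_c B(c) = {0} in the sense that sup norms of evaluations tend to 0. Then the set {c : B' ⊆ B(c)} has an infimum c₀ ∈ (a,b) and B' = B(c₀). -/
/-!
The set `{c | B' ≤ B c}` is nonempty by density of the union and bounded below inside `(a, b)`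
because the intersection is trivial, so its infimum `c₀` lies in `(a, b)`. Comparability then
sandwiches `B'`: every `B x` with `x < c₀` lies in `B'`, so by left continuity
`B c₀ = closure (⋃_{x<c₀} B x) ≤ B'`, while `B' ≤ B x` for all `x > c₀`, so by right continuity
`B' ≤ ⋂_{x>c₀} B x = B c₀`.
-/

open Set

section GLB

variable {ι α : Type*} [ConditionallyCompleteLinearOrder ι] [CompleteLattice α]
  {f : ι → α} {a b c₀ : ι} {y : α}

theorem MonotoneOn.exists_mem_Ioo_isGLB_setOf_le (hf : MonotoneOn f (Ioo a b))
    (hle : ∃ c ∈ Ioo a b, y ≤ f c) (hnle : ∃ c ∈ Ioo a b, ¬ y ≤ f c) :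
    ∃ c₀ ∈ Ioo a b, IsGLB {c ∈ Ioo a b | y ≤ f c} c₀ := by
  obtain ⟨s₀, hs₀, hys₀⟩ := hle
  obtain ⟨c₁, hc₁, hyc₁⟩ := hnle
  set S := {c ∈ Ioo a b | y ≤ f c}
  have hlb : ∀ c ∈ S, c₁ < c := fun c hc =>
    lt_of_not_ge fun hcc₁ => hyc₁ (hc.2.trans (hf hc.1 hc₁ hcc₁))
  have hglb : IsGLB S (sInf S) :=
    isGLB_csInf ⟨s₀, hs₀, hys₀⟩ ⟨c₁, fun c hc => (hlb c hc).le⟩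
  exact ⟨_, ⟨hc₁.1.trans_le (hglb.2 fun c hc => (hlb c hc).le),
    (hglb.1 ⟨hs₀, hys₀⟩).trans_lt hs₀.2⟩, hglb⟩

theorem MonotoneOn.le_of_isGLB_setOf_le (hf : MonotoneOn f (Ioo a b))
    (hglb : IsGLB {c ∈ Ioo a b | y ≤ f c} c₀) (hright : ⨅ x ∈ Ioo c₀ b, f x = f c₀) :
    y ≤ f c₀ := by
  rw [← hright]
  refine le_iInf₂ fun x hx => ?_
  obtain ⟨s, hs, hsx⟩ := (isGLB_lt_iff hglb).mp hx.1
  exact hs.2.trans (hf hs.1 ⟨hs.1.1.trans hsx, hx.2⟩ hsx.le)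

theorem le_of_mem_Ioo_of_isGLB_setOf_le (hcomp : ∀ c ∈ Ioo a b, y ≤ f c ∨ f c ≤ y)
    (hglb : IsGLB {c ∈ Ioo a b | y ≤ f c} c₀) (hc₀ : c₀ ≤ b) {x : ι} (hx : x ∈ Ioo a c₀) :
    f x ≤ y := by
  have hxI : x ∈ Ioo a b := ⟨hx.1, hx.2.trans_le hc₀⟩
  exact (hcomp x hxI).resolve_left fun hy => (hglb.1 ⟨hxI, hy⟩).not_gt hx.2

end GLB

theorem Submodule.exists_le_of_topologicalClosure_iSup_eq_top {R E ι : Type*} [Semiring R]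
    [AddCommMonoid E] [Module R E] [TopologicalSpace E] [ContinuousAdd E]
    [ContinuousConstSMul R E] {B : ι → Submodule R E} {s : Set ι} {B' : Submodule R E}
    (hdense : (⨆ i ∈ s, B i).topologicalClosure = ⊤) (hB' : IsClosed (B' : Set E))
    (hB'top : B' ≠ ⊤) (hcomp : ∀ i ∈ s, B' ≤ B i ∨ B i ≤ B') : ∃ i ∈ s, B' ≤ B i := by
  by_contra! h
  refine hB'top (eq_top_iff.2 ?_)
  rw [← hdense]
  exact topologicalClosure_minimal _ (iSup₂_le fun i hi => (hcomp i hi).resolve_left (h i hi)) hB'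

theorem stmt_9_general {H : Type*} [NormedAddCommGroup H] [InnerProductSpace ℂ H] [CompleteSpace H]
    (a b : ℝ) (B : ℝ → Submodule ℂ H)
    (hmono : ∀ c₁ ∈ Ioo a b, ∀ c₂ ∈ Ioo a b, c₁ < c₂ → B c₁ < B c₂)
    (hdense : (⨆ c ∈ Ioo a b, B c).topologicalClosure = ⊤)
    (hcontR : ∀ c ∈ Ioo a b, (⨅ x ∈ Ioo c b, B x) = B c)
    (hcontL : ∀ c ∈ Ioo a b, (⨆ x ∈ Ioo a c, B x).topologicalClosure = B c)
    (hinf : (⨅ c ∈ Ioo a b, B c) = ⊥)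
    (B' : Submodule ℂ H) (hB'closed : IsClosed (B' : Set H))
    (hcomp : ∀ c ∈ Ioo a b, B' ≤ B c ∨ B c ≤ B')
    (hB'ne : B' ≠ ⊥) (hB'nd : B'.topologicalClosure ≠ ⊤) :
    ∃ c₀ ∈ Ioo a b, IsGLB {c ∈ Ioo a b | B' ≤ B c} c₀ ∧ B' = B c₀ := by
  have hmono' : MonotoneOn B (Ioo a b) := StrictMonoOn.monotoneOn hmono
  have hle : ∃ c ∈ Ioo a b, B' ≤ B c :=
    Submodule.exists_le_of_topologicalClosure_iSup_eq_top hdense hB'closed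
      (hB'closed.submodule_topologicalClosure_eq ▸ hB'nd) hcomp
  have hnle : ∃ c ∈ Ioo a b, ¬ B' ≤ B c := by
    by_contra! h
    exact hB'ne (eq_bot_iff.2 (hinf ▸ le_iInf₂ h))
  obtain ⟨c₀, hc₀, hglb⟩ := hmono'.exists_mem_Ioo_isGLB_setOf_le hle hnle
  refine ⟨c₀, hc₀, hglb, le_antisymm (hmono'.le_of_isGLB_setOf_le hglb (hcontR c₀ hc₀)) ?_⟩
  rw [← hcontL c₀ hc₀]
  exact Submodule.topologicalClosure_minimal _ (iSup₂_le fun x hx =>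
    le_of_mem_Ioo_of_isGLB_setOf_le hcomp hglb hc₀.2.le hx) hB'closed

/-- For a strictly increasing, two-sided continuous chain of closed subspaces `B c`,
`c ∈ (a,b)`, with dense union and trivial intersection, any nontrivial, non-dense closed
subspace `B'` comparable to every member of the chain equals `B c₀`, where `c₀ ∈ (a,b)` is
the infimum of `{c : B' ⊆ B c}`. -/
theorem stmt_9 {H : Type*} [NormedAddCommGroup H] [InnerProductSpace ℂ H] [CompleteSpace H]
    (a b : ℝ) (hab : a < b) (B : ℝ → Submodule ℂ H)
    (hclosed : ∀ c ∈ Ioo a b, IsClosed (B c : Set H))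
    (hmono : ∀ c₁ ∈ Ioo a b, ∀ c₂ ∈ Ioo a b, c₁ < c₂ → B c₁ < B c₂)
    (hdense : (⨆ c ∈ Ioo a b, B c).topologicalClosure = ⊤)
    (hcontR : ∀ c ∈ Ioo a b, (⨅ x ∈ Ioo c b, B x) = B c)
    (hcontL : ∀ c ∈ Ioo a b, (⨆ x ∈ Ioo a c, B x).topologicalClosure = B c)
    (hinf : (⨅ c ∈ Ioo a b, B c) = ⊥)
    (B' : Submodule ℂ H) (hB'closed : IsClosed (B' : Set H))
    (hcomp : ∀ c ∈ Ioo a b, B' ≤ B c ∨ B c ≤ B')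
    (hB'ne : B' ≠ ⊥) (hB'nd : B'.topologicalClosure ≠ ⊤) :
    ∃ c₀ ∈ Ioo a b, IsGLB {c ∈ Ioo a b | B' ≤ B c} c₀ ∧ B' = B c₀ :=
  stmt_9_general a b B hmono hdense hcontR hcontL hinf B' hB'closed hcomp hB'ne hB'nd
end

section
/- Suppose g : (a₁,b₁) → (a₂,b₂) and for each fixed z in ℂ∖ℝ the identity ∫_{a₁}^{x} |φ₁(z,t)|² dt = ∫_{a₂}^{g(x)} |φ₂(z,t)|² dt holds for all x ∈ (a₁,b₁), where φ₁(z,·), φ₂(z,·) are continuous and nowhere vanishing on their intervals with locally integrable squares integrable near the left endpoints. Then g is continuously differentiable and |φ₁(z,x)|² = g'(x)·|φ₂(z,g(x))|² for all x ∈ (a₁,b₁). -/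
/-!
Write `F₁ z x = ∫_{a₁}^{x} |φ₁(z,t)|² dt` and `F₂ z y = ∫_{a₂}^{y} |φ₂(z,t)|² dt`. By the
fundamental theorem of calculus `F₂ z` is strictly differentiable with derivative
`|φ₂(z,·)|² > 0`, hence injective with a differentiable local inverse. Fixing one non-real `z₀`,
the identity `F₂ z₀ ∘ g = F₁ z₀` forces `g = (F₂ z₀)⁻¹ ∘ F₁ z₀` locally, so `g` is differentiable
with the continuous derivative `|φ₁(z₀,·)|² / |φ₂(z₀,g ·)|²`. For any other non-real `z`,
differentiating `F₂ z ∘ g = F₁ z` by the chain rule gives the formula.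
-/

open Set MeasureTheory Filter Topology

section PrimitiveOnIoo

variable {f : ℝ → ℝ} {a b : ℝ}

theorem setIntegral_Ioo_eq_add_intervalIntegral {c y : ℝ} (hac : a ≤ c) (hcy : c ≤ y)
    (hac_int : IntegrableOn f (Ioo a c)) (hcy_int : IntervalIntegrable f volume c y) :
    ∫ t in Ioo a y, f t = (∫ t in Ioo a c, f t) + ∫ t in c..y, f t := by
  rw [← integral_Ioc_eq_integral_Ioo, ← integral_Ioc_eq_integral_Ioo,
    intervalIntegral.integral_of_le hcy, ← Ioc_union_Ioc_eq_Ioc hac hcy]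
  exact setIntegral_union (Ioc_disjoint_Ioc_of_le le_rfl) measurableSet_Ioc
    ((integrableOn_Ioc_iff_integrableOn_Ioo).2 hac_int)
    ((intervalIntegrable_iff_integrableOn_Ioc_of_le hcy).1 hcy_int)

theorem hasStrictDerivAt_setIntegral_Ioo (hf : ContinuousOn f (Ioo a b))
    (hf_int : ∀ x ∈ Ioo a b, IntegrableOn f (Ioo a x)) {x : ℝ} (hx : x ∈ Ioo a b) :
    HasStrictDerivAt (fun u => ∫ t in Ioo a u, f t) (f x) x := by
  obtain ⟨c, hac, hcx⟩ := exists_between hx.1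
  have hc : c ∈ Ioo a b := ⟨hac, hcx.trans hx.2⟩
  have hint : ∀ y ∈ Ioo a b, IntervalIntegrable f volume c y := fun y hy =>
    (hf.mono (ordConnected_Ioo.uIcc_subset hc hy)).intervalIntegrable
  refine HasStrictDerivAt.congr_of_eventuallyEq
    (f := fun u => (∫ t in Ioo a c, f t) + ∫ t in c..u, f t) ?_ ?_
  · exact (intervalIntegral.integral_hasStrictDerivAt_right (hint x hx)
      (hf.stronglyMeasurableAtFilter isOpen_Ioo x hx)
      (hf.continuousAt (isOpen_Ioo.mem_nhds hx))).const_add _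
  · filter_upwards [Ioo_mem_nhds hcx hx.2] with y hy
    exact (setIntegral_Ioo_eq_add_intervalIntegral hac.le hy.1.le (hf_int c hc)
      (hint y ⟨hac.trans hy.1, hy.2⟩)).symm

theorem strictMonoOn_setIntegral_Ioo (hf : ContinuousOn f (Ioo a b))
    (hf_int : ∀ x ∈ Ioo a b, IntegrableOn f (Ioo a x)) (hf_pos : ∀ x ∈ Ioo a b, 0 < f x) :
    StrictMonoOn (fun u => ∫ t in Ioo a u, f t) (Ioo a b) := by
  have hderiv (x : ℝ) (hx : x ∈ Ioo a b) :
      HasStrictDerivAt (fun u => ∫ t in Ioo a u, f t) (f x) x :=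
    hasStrictDerivAt_setIntegral_Ioo hf hf_int hx
  refine strictMonoOn_of_deriv_pos (convex_Ioo a b)
    (fun x hx => (hderiv x hx).hasDerivAt.continuousAt.continuousWithinAt) fun x hx => ?_
  rw [interior_Ioo] at hx
  rw [(hderiv x hx).hasDerivAt.deriv]
  exact hf_pos x hx

end PrimitiveOnIoo

theorem HasDerivAt.of_comp_eq_of_injOn {F₁ F₂ g : ℝ → ℝ} {t : Set ℝ} {x F₁' F₂' : ℝ}
    (ht : IsOpen t) (hinj : InjOn F₂ t) (hg : ∀ᶠ y in 𝓝 x, g y ∈ t)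
    (hcomp : ∀ᶠ y in 𝓝 x, F₂ (g y) = F₁ y) (hF₁ : HasDerivAt F₁ F₁' x)
    (hF₂ : HasStrictDerivAt F₂ F₂' (g x)) (hF₂' : F₂' ≠ 0) :
    HasDerivAt g (F₁' / F₂') x := by
  set h := hF₂.localInverse F₂ F₂' (g x) hF₂'
  have hgx : F₂ (g x) = F₁ x := hcomp.self_of_nhds
  have hh : HasDerivAt h F₂'⁻¹ (F₁ x) := hgx ▸ (hF₂.to_localInverse hF₂').hasDerivAt
  have hh_mem : ∀ᶠ w in 𝓝 (F₁ x), h w ∈ t := by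
    have h_gx : h (F₁ x) = g x := hgx ▸ (hF₂.eventually_left_inverse hF₂').self_of_nhds
    exact hh.continuousAt.preimage_mem_nhds (h_gx ▸ ht.mem_nhds hg.self_of_nhds)
  have hg_eq : h ∘ F₁ =ᶠ[𝓝 x] g := by
    have h_right : ∀ᶠ w in 𝓝 (F₁ x), F₂ (h w) = w := hgx ▸ hF₂.eventually_right_inverse hF₂'
    filter_upwards [hF₁.continuousAt.eventually (hh_mem.and h_right), hg, hcomp]
      with y ⟨hy_mem, hy_inv⟩ hgy hcy
    exact hinj hy_mem hgy (hy_inv.trans hcy.symm)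
  rw [div_eq_inv_mul]
  exact (hh.comp x hF₁).congr_of_eventuallyEq hg_eq.symm

theorem stmt_11_general (a₁ b₁ a₂ b₂ : ℝ)
    (g : ℝ → ℝ) (hmap : ∀ x ∈ Ioo a₁ b₁, g x ∈ Ioo a₂ b₂)
    (φ₁ φ₂ : ℂ → ℝ → ℂ)
    (hcont₁ : ∀ z : ℂ, z.im ≠ 0 → ContinuousOn (φ₁ z) (Ioo a₁ b₁))
    (hcont₂ : ∀ z : ℂ, z.im ≠ 0 → ContinuousOn (φ₂ z) (Ioo a₂ b₂))
    (hne₂ : ∀ z : ℂ, z.im ≠ 0 → ∀ x ∈ Ioo a₂ b₂, φ₂ z x ≠ 0)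
    (hint₁ : ∀ z : ℂ, z.im ≠ 0 → ∀ x ∈ Ioo a₁ b₁,
      IntegrableOn (fun t => ‖φ₁ z t‖ ^ 2) (Ioo a₁ x))
    (hint₂ : ∀ z : ℂ, z.im ≠ 0 → ∀ y ∈ Ioo a₂ b₂,
      IntegrableOn (fun t => ‖φ₂ z t‖ ^ 2) (Ioo a₂ y))
    (hident : ∀ z : ℂ, z.im ≠ 0 → ∀ x ∈ Ioo a₁ b₁,
      ∫ t in Ioo a₁ x, ‖φ₁ z t‖ ^ 2 = ∫ t in Ioo a₂ (g x), ‖φ₂ z t‖ ^ 2) :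
    ∃ g' : ℝ → ℝ, ContinuousOn g' (Ioo a₁ b₁) ∧
      (∀ x ∈ Ioo a₁ b₁, HasDerivAt g (g' x) x) ∧
      ∀ z : ℂ, z.im ≠ 0 → ∀ x ∈ Ioo a₁ b₁,
        ‖φ₁ z x‖ ^ 2 = g' x * ‖φ₂ z (g x)‖ ^ 2 := by
  have hI : Complex.I.im ≠ 0 := by simp
  have hpos₂ z (hz : z.im ≠ 0) y (hy : y ∈ Ioo a₂ b₂) : 0 < ‖φ₂ z y‖ ^ 2 :=
    pow_pos (norm_pos_iff.2 (hne₂ z hz y hy)) 2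
  have hF₁ z (hz : z.im ≠ 0) x (hx : x ∈ Ioo a₁ b₁) :
      HasDerivAt (fun u => ∫ t in Ioo a₁ u, ‖φ₁ z t‖ ^ 2) (‖φ₁ z x‖ ^ 2) x :=
    (hasStrictDerivAt_setIntegral_Ioo ((hcont₁ z hz).norm.pow 2) (hint₁ z hz) hx).hasDerivAt
  have hF₂ z (hz : z.im ≠ 0) y (hy : y ∈ Ioo a₂ b₂) :
      HasStrictDerivAt (fun u => ∫ t in Ioo a₂ u, ‖φ₂ z t‖ ^ 2) (‖φ₂ z y‖ ^ 2) y :=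
    hasStrictDerivAt_setIntegral_Ioo ((hcont₂ z hz).norm.pow 2) (hint₂ z hz) hy
  have hcomp z (hz : z.im ≠ 0) x (hx : x ∈ Ioo a₁ b₁) :
      (fun y => ∫ t in Ioo a₂ (g y), ‖φ₂ z t‖ ^ 2) =ᶠ[𝓝 x]
        fun y => ∫ t in Ioo a₁ y, ‖φ₁ z t‖ ^ 2 := by
    filter_upwards [isOpen_Ioo.mem_nhds hx] with y hy using (hident z hz y hy).symm
  have hg x (hx : x ∈ Ioo a₁ b₁) :
      HasDerivAt g (‖φ₁ Complex.I x‖ ^ 2 / ‖φ₂ Complex.I (g x)‖ ^ 2) x :=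
    .of_comp_eq_of_injOn isOpen_Ioo
      (strictMonoOn_setIntegral_Ioo ((hcont₂ _ hI).norm.pow 2) (hint₂ _ hI) (hpos₂ _ hI)).injOn
      (eventually_of_mem (isOpen_Ioo.mem_nhds hx) hmap) (hcomp _ hI x hx) (hF₁ _ hI x hx)
      (hF₂ _ hI _ (hmap x hx)) (hpos₂ _ hI _ (hmap x hx)).ne'
  refine ⟨_, ?_, hg, fun z hz x hx => ?_⟩
  · have hg_cont : ContinuousOn g (Ioo a₁ b₁) := fun x hx =>
      (hg x hx).continuousAt.continuousWithinAt
    exact ((hcont₁ _ hI).norm.pow 2).div (((hcont₂ _ hI).norm.pow 2).comp hg_cont hmap)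
      fun x hx => (hpos₂ _ hI _ (hmap x hx)).ne'
  · have hchain := ((hF₂ z hz _ (hmap x hx)).hasDerivAt.comp x (hg x hx)).congr_of_eventuallyEq
      (hcomp z hz x hx).symm
    rw [(hF₁ z hz x hx).unique hchain, mul_comm]

/-- If `∫_{a₁}^{x} |φ₁(z,t)|² dt = ∫_{a₂}^{g(x)} |φ₂(z,t)|² dt` for all `x` and all
non-real `z`, then `g` is continuously differentiable with
`|φ₁(z,x)|² = g'(x)·|φ₂(z,g(x))|²`. -/
theorem stmt_11 (a₁ b₁ a₂ b₂ : ℝ) (hab₁ : a₁ < b₁) (hab₂ : a₂ < b₂)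
    (g : ℝ → ℝ) (hmap : ∀ x ∈ Ioo a₁ b₁, g x ∈ Ioo a₂ b₂)
    (φ₁ φ₂ : ℂ → ℝ → ℂ)
    (hcont₁ : ∀ z : ℂ, z.im ≠ 0 → ContinuousOn (φ₁ z) (Ioo a₁ b₁))
    (hcont₂ : ∀ z : ℂ, z.im ≠ 0 → ContinuousOn (φ₂ z) (Ioo a₂ b₂))
    (hne₁ : ∀ z : ℂ, z.im ≠ 0 → ∀ x ∈ Ioo a₁ b₁, φ₁ z x ≠ 0)
    (hne₂ : ∀ z : ℂ, z.im ≠ 0 → ∀ x ∈ Ioo a₂ b₂, φ₂ z x ≠ 0)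
    (hint₁ : ∀ z : ℂ, z.im ≠ 0 → ∀ x ∈ Ioo a₁ b₁,
      IntegrableOn (fun t => ‖φ₁ z t‖ ^ 2) (Ioo a₁ x))
    (hint₂ : ∀ z : ℂ, z.im ≠ 0 → ∀ y ∈ Ioo a₂ b₂,
      IntegrableOn (fun t => ‖φ₂ z t‖ ^ 2) (Ioo a₂ y))
    (hident : ∀ z : ℂ, z.im ≠ 0 → ∀ x ∈ Ioo a₁ b₁,
      ∫ t in Ioo a₁ x, ‖φ₁ z t‖ ^ 2 = ∫ t in Ioo a₂ (g x), ‖φ₂ z t‖ ^ 2) :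
    ∃ g' : ℝ → ℝ, ContinuousOn g' (Ioo a₁ b₁) ∧
      (∀ x ∈ Ioo a₁ b₁, HasDerivAt g (g' x) x) ∧
      ∀ z : ℂ, z.im ≠ 0 → ∀ x ∈ Ioo a₁ b₁,
        ‖φ₁ z x‖ ^ 2 = g' x * ‖φ₂ z (g x)‖ ^ 2 :=
  stmt_11_general a₁ b₁ a₂ b₂ g hmap φ₁ φ₂ hcont₁ hcont₂ hne₂ hint₁ hint₂ hident
end
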